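/- arXiv:1301.0091 — 2 statements merged into one kernel-verified Lean document; each statement's English description precedes it below -/
import Mathlib

section
/- Let 0 ≤ t ≤ s ≤ T and let {ξ_i}_{i∈ℕ} be a sequence of ℝ^{d̃}-valued F^t_T-measurable random variables converging to 0 in P^t_0-probability. Then there exists a subsequence {ξ̂_i} such that for P^t_0-almost every ω ∈ Ω^t, the shifted sequence {ξ̂_i^{s,ω}}, with ξ̂_i^{s,ω}(ω̃) = ξ̂_i(ω ⊗_s ω̃), converges to 0 in P^s_0-probability on Ω^s. -/
open MeasureTheory Set Filter

noncomputable section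

/-- Canonical path space `Ω^{t,T}`: continuous `ℝ^d`-valued paths, encoded as functions on `ℝ`
that vanish on `(-∞, t]` and are constant on `[T, ∞)`. -/
def Paths (d : ℕ) (t T : ℝ) : Type :=
  {ω : ℝ → (Fin d → ℝ) //
    Continuous ω ∧ (∀ r, r ≤ t → ω r = 0) ∧ (∀ r, T ≤ r → ω r = ω T)}

/-- The natural filtration `F^t_s = σ(B^t_r : r ∈ [t, s])` of the canonical process. -/
def FF (d : ℕ) (t T s : ℝ) : MeasurableSpace (Paths d t T) :=
  ⨆ r ∈ Set.Icc t s, MeasurableSpace.comap (fun ω : Paths d t T => ω.1 r) inferInstance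

/-- Concatenation of paths at time `s`. -/
def concat {d : ℕ} {t s T : ℝ} (hts : t ≤ s) (hsT : s ≤ T)
    (ω : Paths d t T) (ϖ : Paths d s T) : Paths d t T :=
  ⟨fun r => ω.1 (min r s) + ϖ.1 (max r s), by
    refine ⟨?_, ?_, ?_⟩
    · exact (ω.2.1.comp (continuous_id.min continuous_const)).add
        (ϖ.2.1.comp (continuous_id.max continuous_const))
    · intro r hr
      show ω.1 (min r s) + ϖ.1 (max r s) = 0
      rw [ω.2.2.1 _ ((min_le_left r s).trans hr),
        ϖ.2.2.1 _ (max_le (hr.trans hts) le_rfl), add_zero]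
    · intro r hr
      have hsr : s ≤ r := hsT.trans hr
      show ω.1 (min r s) + ϖ.1 (max r s) = ω.1 (min T s) + ϖ.1 (max T s)
      rw [min_eq_right hsr, max_eq_left hsr, min_eq_right hsT, max_eq_left hsT,
        ϖ.2.2.2 r hr]⟩

/-- Product of `d` centered Gaussians with variance `v`. -/
def gaussianPi (d : ℕ) (v : ℝ) : Measure (Fin d → ℝ) :=
  Measure.pi fun _ => ProbabilityTheory.gaussianReal 0 v.toNNReal

instance instPathsMeasurableSpace (d : ℕ) (t T : ℝ) : MeasurableSpace (Paths d t T) :=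
  FF d t T T

/-- `P` is the Wiener measure on the path space `Ω^{t,T}`: a probability measure whose
increments are centered Gaussian with the correct variance and independent of the past. -/
structure IsWiener {d : ℕ} {t T : ℝ} (P : Measure (Paths d t T)) : Prop where
  prob : IsProbabilityMeasure P
  gauss_incr : ∀ r r' : ℝ, t ≤ r → r ≤ r' → r' ≤ T →
    P.map (fun ω : Paths d t T => ω.1 r' - ω.1 r) = gaussianPi d (r' - r)
  indep_incr : ∀ r r' : ℝ, t ≤ r → r ≤ r' → r' ≤ T →
    ∀ A : Set (Paths d t T), MeasurableSet[FF d t T r] A →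
    ∀ E : Set (Fin d → ℝ), MeasurableSet E →
      P (A ∩ (fun ω : Paths d t T => ω.1 r' - ω.1 r) ⁻¹' E) =
        P A * P ((fun ω : Paths d t T => ω.1 r' - ω.1 r) ⁻¹' E)

/-!
Under `P ⊗ Q` the concatenated path `ω ⊗_s ϖ` has independent centred Gaussian increments over
every interval that does not cross `s`. Such increments determine all finite-dimensional
distributions, so `ω ⊗_s ϖ` is again `P`-distributed. Now pass to a subsequence `ξ_{φ i}`
converging to `0` `P`-a.s.: the exceptional set pulls back to a `P ⊗ Q`-null set, so by Fubini,
for `P`-a.e. `ω` the shifted sequence converges `Q`-a.s., hence in `Q`-probability.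
-/

open ProbabilityTheory

lemma Finset.exists_strictMono_fin_of_isLeast {α : Type*} [LinearOrder α]
    {F : Finset α} {a : α} (h : IsLeast (F : Set α) a) :
    ∃ (n : ℕ) (f : Fin (n + 1) → α), StrictMono f ∧ f 0 = a ∧ Set.range f = F := by
  have hne : F.Nonempty := ⟨a, h.1⟩
  have hcard : F.card = F.card - 1 + 1 := (Nat.succ_pred_eq_of_pos hne.card_pos).symm
  refine ⟨_, F.orderEmbOfFin hcard, (F.orderEmbOfFin hcard).strictMono, ?_,
    F.range_orderEmbOfFin hcard⟩
  rw [← Fin.mk_zero, Finset.orderEmbOfFin_zero hcard (Nat.succ_pos _)]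
  exact (F.isLeast_min' hne).unique h

lemma MeasureTheory.tendstoInMeasure_zero_iff_norm_lt {α ι E : Type*} [MeasurableSpace α]
    [SeminormedAddCommGroup E] {μ : Measure α} {l : Filter ι} {f : ι → α → E} :
    TendstoInMeasure μ f l 0 ↔
      ∀ ε : ℝ, 0 < ε → Tendsto (fun i => μ {x | ε < ‖f i x‖}) l (nhds 0) := by
  simp only [tendstoInMeasure_iff_norm, Pi.zero_apply, sub_zero]
  refine ⟨fun h ε hε => ?_, fun h ε hε => ?_⟩
  · refine tendsto_of_tendsto_of_tendsto_of_le_of_le tendsto_const_nhds (h ε hε)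
      (fun _ => zero_le) fun _ => measure_mono fun _ (hx : ε < _) => hx.le
  · refine tendsto_of_tendsto_of_tendsto_of_le_of_le tendsto_const_nhds
      (h (ε / 2) (by positivity)) (fun _ => zero_le) fun _ => measure_mono fun _ (hx : ε ≤ _) => ?_
    exact (half_lt_self hε).trans_le hx

namespace Paths

variable {d : ℕ} {t s T : ℝ}

lemma FF_mono {u u' : ℝ} (h : u ≤ u') : FF d t T u ≤ FF d t T u' :=
  biSup_mono fun _ hr => ⟨hr.1, hr.2.trans h⟩

lemma measurable_FF_iff {α : Type*} {mα : MeasurableSpace α} {f : α → Paths d t T} {u : ℝ} :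
    Measurable[_, FF d t T u] f ↔ ∀ r ∈ Icc t u, Measurable fun a => (f a).1 r := by
  simp only [FF, measurable_iff_comap_le, MeasurableSpace.comap_iSup, iSup₂_le_iff,
    MeasurableSpace.comap_comp]
  rfl

lemma mem_iff_of_eqOn_Iic {u : ℝ} {A : Set (Paths d t T)} (hA : MeasurableSet[FF d t T u] A)
    {ω ω' : Paths d t T} (h : ∀ r ≤ u, ω.1 r = ω'.1 r) : ω ∈ A ↔ ω' ∈ A := by
  let R : Paths d t T → Iic u → Fin d → ℝ := fun ω r => ω.1 r
  have hR : Measurable[MeasurableSpace.comap R MeasurableSpace.pi, FF d t T u] id :=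
    measurable_FF_iff.2 fun r hr =>
      (measurable_pi_apply (⟨r, hr.2⟩ : Iic u)).comp (comap_measurable R)
  obtain ⟨B, -, hB⟩ := hR hA
  rw [preimage_id] at hB
  subst hB
  have hRω : R ω = R ω' := funext fun r => h r r.2
  simp only [mem_preimage, hRω]

lemma measurable_eval_FF {u r : ℝ} (hr : r ≤ u) :
    Measurable[FF d t T u] fun ω : Paths d t T => ω.1 r := by
  rcases le_or_gt r t with hrt | htr
  · simp only [fun ω : Paths d t T => ω.2.2.1 r hrt]
    exact measurable_const
  · exact Measurable.of_comap_le <|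
      le_iSup₂ (f := fun r (_ : r ∈ Icc t u) => MeasurableSpace.comap
        (fun ω : Paths d t T => ω.1 r) inferInstance) r ⟨htr.le, hr⟩

lemma measurable_eval {r : ℝ} (hr : r ≤ T) : Measurable fun ω : Paths d t T => ω.1 r :=
  measurable_eval_FF hr

lemma measurable_incr {r r' : ℝ} (hrT : r ≤ T) (hr'T : r' ≤ T) :
    Measurable fun ω : Paths d t T => ω.1 r' - ω.1 r :=
  (measurable_eval hr'T).sub (measurable_eval hrT)

def evalAt {n : ℕ} (rs : Fin n → ℝ) (ω : Paths d t T) : Fin n → Fin d → ℝ :=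
  fun i => ω.1 (rs i)

lemma measurable_evalAt_FF {n : ℕ} {u : ℝ} {rs : Fin n → ℝ} (h : ∀ i, rs i ≤ u) :
    Measurable[FF d t T u] (evalAt (d := d) (t := t) (T := T) rs) :=
  @measurable_pi_lambda _ _ _ (FF d t T u) _ _ fun i => measurable_eval_FF (h i)

lemma measurable_evalAt {n : ℕ} {rs : Fin n → ℝ} (h : ∀ i, rs i ≤ T) :
    Measurable (evalAt (d := d) (t := t) (T := T) rs) :=
  measurable_evalAt_FF h

lemma exists_evalAt_eq_comp {m n : ℕ} {rs : Fin m → ℝ} {rs' : Fin n → ℝ}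
    (h : range rs ⊆ range rs') :
    ∃ g : (Fin n → Fin d → ℝ) → Fin m → Fin d → ℝ, Measurable g ∧
      ∀ ω : Paths d t T, evalAt rs ω = g (evalAt rs' ω) := by
  choose j hj using fun i => h (mem_range_self i)
  exact ⟨fun z i => z (j i), measurable_pi_lambda _ fun i => measurable_pi_apply _,
    fun ω => funext fun i => by simp only [evalAt, hj]⟩

lemma eq_of_map_evalAt_eq {μ ν : Measure (Paths d t T)} [IsFiniteMeasure μ]
    (h : ∀ (n : ℕ) (rs : Fin n → ℝ), (∀ i, rs i ∈ Icc t T) →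
      μ.map (evalAt rs) = ν.map (evalAt rs)) : μ = ν := by
  let C : Set (Set (Paths d t T)) :=
    {A | ∃ (n : ℕ) (rs : Fin n → ℝ) (B : Set (Fin n → Fin d → ℝ)),
      (∀ i, rs i ∈ Icc t T) ∧ MeasurableSet B ∧ A = evalAt rs ⁻¹' B}
  have hmeas : ∀ A ∈ C, MeasurableSet A := by
    rintro _ ⟨n, rs, B, hrs, hB, rfl⟩
    exact measurable_evalAt (fun i => (hrs i).2) hB
  have hgen : FF d t T T = MeasurableSpace.generateFrom C := by
    refine le_antisymm (iSup₂_le fun r hr => ?_) (MeasurableSpace.generateFrom_le hmeas)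
    rintro _ ⟨E, hE, rfl⟩
    exact MeasurableSpace.measurableSet_generateFrom
      ⟨1, fun _ => r, (fun z => z 0) ⁻¹' E, fun _ => hr, measurable_pi_apply 0 hE, rfl⟩
  have hpi : IsPiSystem C := by
    rintro _ ⟨m, rs₁, B₁, hrs₁, hB₁, rfl⟩ _ ⟨n, rs₂, B₂, hrs₂, hB₂, rfl⟩ -
    obtain ⟨g₁, hg₁, hω₁⟩ := exists_evalAt_eq_comp (d := d) (t := t) (T := T)
      (rs' := Fin.append rs₁ rs₂) (rs := rs₁) (by
        rintro _ ⟨i, rfl⟩; exact ⟨Fin.castAdd n i, Fin.append_left _ _ _⟩)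
    obtain ⟨g₂, hg₂, hω₂⟩ := exists_evalAt_eq_comp (d := d) (t := t) (T := T)
      (rs' := Fin.append rs₁ rs₂) (rs := rs₂) (by
        rintro _ ⟨i, rfl⟩; exact ⟨Fin.natAdd m i, Fin.append_right _ _ _⟩)
    refine ⟨m + n, Fin.append rs₁ rs₂, g₁ ⁻¹' B₁ ∩ g₂ ⁻¹' B₂,
      Fin.addCases (fun i => by simpa using hrs₁ i) (fun i => by simpa using hrs₂ i),
      (hg₁ hB₁).inter (hg₂ hB₂), ?_⟩
    ext ω
    simp only [mem_inter_iff, mem_preimage, hω₁, hω₂]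
  refine ext_of_generate_finite C hgen hpi ?_ ?_
  · rintro _ ⟨n, rs, B, hrs, hB, rfl⟩
    rw [← Measure.map_apply (measurable_evalAt fun i => (hrs i).2) hB, h n rs hrs,
      Measure.map_apply (measurable_evalAt fun i => (hrs i).2) hB]
  · have hev := measurable_evalAt (d := d) (t := t) (T := T) (rs := Fin.elim0) fun i => i.elim0
    simpa [Measure.map_apply hev MeasurableSet.univ] using
      congrArg (· univ) (h 0 Fin.elim0 fun i => i.elim0)

/-- These are the properties of Wiener measure that the law of a concatenation at `s` visibly
inherits; they already determine the measure (`HasWienerIncrementsNotCrossing.eq`). -/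
structure HasWienerIncrementsNotCrossing (s : ℝ) (μ : Measure (Paths d t T)) : Prop where
  prob : IsProbabilityMeasure μ
  gauss_incr : ∀ r r' : ℝ, t ≤ r → r ≤ r' → r' ≤ T → (r' ≤ s ∨ s ≤ r) →
    μ.map (fun ω : Paths d t T => ω.1 r' - ω.1 r) = gaussianPi d (r' - r)
  indep_incr : ∀ r r' : ℝ, t ≤ r → r ≤ r' → r' ≤ T → (r' ≤ s ∨ s ≤ r) →
    ∀ A : Set (Paths d t T), MeasurableSet[FF d t T r] A →
    ∀ E : Set (Fin d → ℝ), MeasurableSet E →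
      μ (A ∩ (fun ω : Paths d t T => ω.1 r' - ω.1 r) ⁻¹' E) =
        μ A * μ ((fun ω : Paths d t T => ω.1 r' - ω.1 r) ⁻¹' E)

lemma _root_.IsWiener.hasWienerIncrementsNotCrossing {μ : Measure (Paths d t T)}
    (h : IsWiener μ) : HasWienerIncrementsNotCrossing s μ :=
  ⟨h.prob, fun r r' h₁ h₂ h₃ _ => h.gauss_incr r r' h₁ h₂ h₃,
    fun r r' h₁ h₂ h₃ _ => h.indep_incr r r' h₁ h₂ h₃⟩

namespace HasWienerIncrementsNotCrossing

variable {μ ν : Measure (Paths d t T)}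

lemma map_evalAt_prod_incr (hμ : HasWienerIncrementsNotCrossing s μ) {n : ℕ}
    {rs : Fin n → ℝ} {r r' : ℝ} (hrs : ∀ i, rs i ≤ r) (htr : t ≤ r) (hrr' : r ≤ r')
    (hr'T : r' ≤ T) (hcross : r' ≤ s ∨ s ≤ r) :
    μ.map (fun ω => (evalAt rs ω, ω.1 r' - ω.1 r)) =
      (μ.map (evalAt rs)).prod (gaussianPi d (r' - r)) := by
  have := hμ.prob
  have hindep : evalAt rs ⟂ᵢ[μ] fun ω : Paths d t T => ω.1 r' - ω.1 r :=
    indepFun_iff_measure_inter_preimage_eq_mul.2 fun _ E hB hE =>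
      hμ.indep_incr r r' htr hrr' hr'T hcross _ (measurable_evalAt_FF hrs hB) E hE
  rw [(indepFun_iff_map_prod_eq_prod_map_map
      (measurable_evalAt fun i => (hrs i).trans (hrr'.trans hr'T)).aemeasurable
      (measurable_incr (hrr'.trans hr'T) hr'T).aemeasurable).1 hindep,
    hμ.gauss_incr r r' htr hrr' hr'T hcross]

lemma measurable_snoc_add {n : ℕ} :
    Measurable fun p : (Fin (n + 1) → Fin d → ℝ) × (Fin d → ℝ) =>
      (Fin.snoc p.1 (p.1 (Fin.last n) + p.2) : Fin (n + 2) → Fin d → ℝ) := by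
  refine measurable_pi_lambda _ fun i => ?_
  induction i using Fin.lastCases with
  | last =>
    simp only [Fin.snoc_last]
    exact ((measurable_pi_apply _).comp measurable_fst).add measurable_snd
  | cast i =>
    simp only [Fin.snoc_castSucc]
    exact (measurable_pi_apply _).comp measurable_fst

lemma map_evalAt_snoc (hμ : HasWienerIncrementsNotCrossing s μ) {n : ℕ}
    {rs : Fin (n + 1) → ℝ} {r' : ℝ} (hrs : ∀ i, rs i ≤ rs (Fin.last n))
    (ht : t ≤ rs (Fin.last n)) (hr' : rs (Fin.last n) ≤ r') (hr'T : r' ≤ T)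
    (hcross : r' ≤ s ∨ s ≤ rs (Fin.last n)) :
    μ.map (evalAt (Fin.snoc rs r')) =
      ((μ.map (evalAt rs)).prod (gaussianPi d (r' - rs (Fin.last n)))).map
        fun p => (Fin.snoc p.1 (p.1 (Fin.last n) + p.2) : Fin (n + 2) → Fin d → ℝ) := by
  have hT : rs (Fin.last n) ≤ T := hr'.trans hr'T
  have hcomp : evalAt (d := d) (t := t) (T := T) (Fin.snoc rs r') =
      (fun p => (Fin.snoc p.1 (p.1 (Fin.last n) + p.2) : Fin (n + 2) → Fin d → ℝ)) ∘
        fun ω => (evalAt rs ω, ω.1 r' - ω.1 (rs (Fin.last n))) := by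
    funext ω i
    induction i using Fin.lastCases with
    | last => simp [evalAt]
    | cast i => simp [evalAt]
  rw [← map_evalAt_prod_incr hμ hrs ht hr' hr'T hcross, hcomp,
    Measure.map_map measurable_snoc_add
      ((measurable_evalAt fun i => (hrs i).trans hT).prodMk (measurable_incr hT hr'T))]

lemma map_evalAt_eq_of_monotone (hμ : HasWienerIncrementsNotCrossing s μ)
    (hν : HasWienerIncrementsNotCrossing s ν) :
    ∀ {n : ℕ} {rs : Fin (n + 1) → ℝ}, Monotone rs → rs 0 = t → rs (Fin.last n) ≤ T →
      ((∀ i, rs i ≤ s) ∨ s ∈ range rs) → μ.map (evalAt rs) = ν.map (evalAt rs)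
  | 0, rs, _, h0, _, _ => by
    have := hμ.prob
    have := hν.prob
    have hzero : evalAt (d := d) (t := t) (T := T) rs = fun _ => 0 := by
      funext ω i
      rw [Fin.fin_one_eq_zero i, evalAt, h0]
      exact ω.2.2.1 t le_rfl
    simp only [hzero, Measure.map_const, measure_univ, one_smul]
  | n + 1, rs, hmono, h0, hT, hs => by
    have hlast : ∀ i, Fin.init rs i ≤ Fin.init rs (Fin.last n) := fun i =>
      hmono (Fin.castSucc_le_castSucc_iff.2 (Fin.le_last i))
    have ht : t ≤ Fin.init rs (Fin.last n) := h0 ▸ hmono (Fin.zero_le _)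
    have hr' : Fin.init rs (Fin.last n) ≤ rs (Fin.last (n + 1)) := hmono (Fin.le_last _)
    obtain ⟨hcross, hs'⟩ : (rs (Fin.last (n + 1)) ≤ s ∨ s ≤ Fin.init rs (Fin.last n)) ∧
        ((∀ i, Fin.init rs i ≤ s) ∨ s ∈ range (Fin.init rs)) := by
      rcases hs with hle | ⟨k, rfl⟩
      · exact ⟨.inl (hle _), .inl fun i => hle _⟩
      · induction k using Fin.lastCases with
        | last => exact ⟨.inl le_rfl, .inl fun i => hmono (Fin.le_last _)⟩
        | cast j => exact ⟨.inr (hlast j), .inr ⟨j, rfl⟩⟩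
    have hinit := map_evalAt_eq_of_monotone hμ hν (rs := Fin.init rs)
      (fun i j hij => hmono (Fin.castSucc_le_castSucc_iff.2 hij)) h0 (hr'.trans hT) hs'
    rw [← Fin.snoc_init_self rs, map_evalAt_snoc hμ hlast ht hr' hT hcross,
      map_evalAt_snoc hν hlast ht hr' hT hcross, hinit]

lemma eq (hμ : HasWienerIncrementsNotCrossing s μ) (hν : HasWienerIncrementsNotCrossing s ν)
    (hts : t ≤ s) (hsT : s ≤ T) : μ = ν := by
  have := hμ.prob
  refine eq_of_map_evalAt_eq fun n rs hrs => ?_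
  -- Sorting the times together with `t` and `s` puts them in the scope of
  -- `map_evalAt_eq_of_monotone`: no two consecutive times then straddle `s`.
  let F : Finset ℝ := insert t (insert s (Finset.univ.image rs))
  have hFIcc : ∀ r ∈ F, r ∈ Icc t T := by
    simp only [F, Finset.mem_insert, Finset.mem_image, Finset.mem_univ, true_and]
    rintro r (rfl | rfl | ⟨i, rfl⟩)
    exacts [⟨le_rfl, hts.trans hsT⟩, ⟨hts, hsT⟩, hrs i]
  obtain ⟨m, rs', hmono, h0, hrange⟩ := Finset.exists_strictMono_fin_of_isLeast
    ⟨Finset.mem_insert_self t _, fun r hr => (hFIcc r hr).1⟩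
  have hrs'T : ∀ i, rs' i ≤ T := fun i => (hFIcc _ (hrange.le (mem_range_self i))).2
  obtain ⟨g, hg, hcomp⟩ := exists_evalAt_eq_comp (d := d) (t := t) (T := T)
    (rs := rs) (rs' := rs') (by rw [hrange]; rintro _ ⟨i, rfl⟩; simp)
  have hfac : evalAt (d := d) (t := t) (T := T) rs = g ∘ evalAt rs' := funext hcomp
  rw [hfac, ← Measure.map_map hg (measurable_evalAt hrs'T),
    ← Measure.map_map hg (measurable_evalAt hrs'T),
    map_evalAt_eq_of_monotone hμ hν hmono.monotone h0 (hrs'T _)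
      (.inr (hrange ▸ by simp))]

end HasWienerIncrementsNotCrossing

section Concat

variable (hts : t ≤ s) (hsT : s ≤ T)

lemma concat_apply_of_le (ω : Paths d t T) (ϖ : Paths d s T) {r : ℝ} (hr : r ≤ s) :
    (concat hts hsT ω ϖ).1 r = ω.1 r := by
  simp only [concat, min_eq_left hr, max_eq_right hr, ϖ.2.2.1 s le_rfl, add_zero]

lemma concat_apply_of_ge (ω : Paths d t T) (ϖ : Paths d s T) {r : ℝ} (hr : s ≤ r) :
    (concat hts hsT ω ϖ).1 r = ω.1 s + ϖ.1 r := by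
  simp only [concat, min_eq_right hr, max_eq_left hr]

lemma measurable_uncurry_concat : Measurable (Function.uncurry (concat (d := d) hts hsT)) :=
  measurable_FF_iff.2 fun _ hr =>
    ((measurable_eval (min_le_of_right_le hsT)).comp measurable_fst).add
      ((measurable_eval (max_le hr.2 hsT)).comp measurable_snd)

lemma measurable_concat_FF (ω : Paths d t T) {u : ℝ} (hsu : s ≤ u) :
    Measurable[FF d s T u, FF d t T u] (concat hts hsT ω) :=
  measurable_FF_iff.2 fun _ hr =>
    measurable_const.add (measurable_eval_FF (max_le hr.2 hsu))

variable {P : Measure (Paths d t T)} {Q : Measure (Paths d s T)}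

lemma map_concat_prod_apply_of_le [SFinite P] [IsProbabilityMeasure Q] {u : ℝ} (hus : u ≤ s)
    {A : Set (Paths d t T)} (hA : MeasurableSet[FF d t T u] A) :
    (P.prod Q).map (Function.uncurry (concat hts hsT)) A = P A := by
  have hpre : Function.uncurry (concat hts hsT) ⁻¹' A = A ×ˢ univ := by
    ext p
    simp only [mem_preimage, mem_prod, mem_univ, and_true]
    exact mem_iff_of_eqOn_Iic hA fun r hr => concat_apply_of_le hts hsT _ _ (hr.trans hus)
  rw [Measure.map_apply (measurable_uncurry_concat hts hsT) (FF_mono (hus.trans hsT) A hA),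
    hpre, Measure.prod_prod, measure_univ, mul_one]

lemma prod_concat_preimage_inter_incr [SFinite P] [IsFiniteMeasure Q] (hQ : IsWiener Q)
    {r r' : ℝ} (hsr : s ≤ r) (hrr' : r ≤ r') (hr'T : r' ≤ T)
    {A : Set (Paths d t T)} (hA : MeasurableSet[FF d t T r] A)
    {E : Set (Fin d → ℝ)} (hE : MeasurableSet E) :
    P.prod Q (Function.uncurry (concat hts hsT) ⁻¹' A ∩
        Prod.snd ⁻¹' ((fun ϖ : Paths d s T => ϖ.1 r' - ϖ.1 r) ⁻¹' E)) =
      P.prod Q (Function.uncurry (concat hts hsT) ⁻¹' A) *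
        Q ((fun ϖ : Paths d s T => ϖ.1 r' - ϖ.1 r) ⁻¹' E) := by
  have hA' : MeasurableSet (Function.uncurry (concat hts hsT) ⁻¹' A) :=
    measurable_uncurry_concat hts hsT (FF_mono (hrr'.trans hr'T) A hA)
  rw [Measure.prod_apply (hA'.inter (measurable_snd (measurable_incr (hrr'.trans hr'T) hr'T hE))),
    Measure.prod_apply hA', ← lintegral_mul_const' _ _ (measure_ne_top _ _)]
  refine lintegral_congr fun ω => ?_
  exact hQ.indep_incr r r' hsr hrr' hr'T _ (measurable_concat_FF hts hsT ω hsr hA) E hE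

lemma concat_preimage_incr_of_ge {r r' : ℝ} (hsr : s ≤ r) (hrr' : r ≤ r')
    (E : Set (Fin d → ℝ)) :
    Function.uncurry (concat hts hsT) ⁻¹' ((fun ω : Paths d t T => ω.1 r' - ω.1 r) ⁻¹' E) =
      Prod.snd ⁻¹' ((fun ϖ : Paths d s T => ϖ.1 r' - ϖ.1 r) ⁻¹' E) := by
  ext ⟨ω, ϖ⟩
  simp only [mem_preimage, Function.uncurry_apply_pair,
    concat_apply_of_ge hts hsT _ _ (hsr.trans hrr'), concat_apply_of_ge hts hsT _ _ hsr,
    add_sub_add_left_eq_sub]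

lemma hasWienerIncrementsNotCrossing_map_concat (hP : IsWiener P) (hQ : IsWiener Q) :
    HasWienerIncrementsNotCrossing s ((P.prod Q).map (Function.uncurry (concat hts hsT))) := by
  have := hP.prob
  have := hQ.prob
  have hc := measurable_uncurry_concat (d := d) hts hsT
  have hsnd : ∀ S, (P.prod Q) (Prod.snd ⁻¹' S) = Q S := fun S => by
    rw [← univ_prod, Measure.prod_prod, measure_univ, one_mul]
  refine ⟨Measure.isProbabilityMeasure_map hc.aemeasurable, ?_, ?_⟩ <;>
    intro r r' htr hrr' hr'T hcross <;>
    have hincrFF : Measurable[FF d t T r'] fun ω : Paths d t T => ω.1 r' - ω.1 r :=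
      (measurable_eval_FF le_rfl).sub (measurable_eval_FF hrr') <;>
    have hincr : Measurable fun ω : Paths d t T => ω.1 r' - ω.1 r :=
      hincrFF.mono (FF_mono hr'T) le_rfl
  · ext E hE
    rw [Measure.map_apply hincr hE]
    rcases hcross with hr's | hsr
    · rw [map_concat_prod_apply_of_le hts hsT hr's (hincrFF hE), ← Measure.map_apply hincr hE,
        hP.gauss_incr r r' htr hrr' hr'T]
    · rw [Measure.map_apply hc (hincr hE), concat_preimage_incr_of_ge hts hsT hsr hrr', hsnd,
        ← Measure.map_apply (measurable_incr (hrr'.trans hr'T) hr'T) hE,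
        hQ.gauss_incr r r' hsr hrr' hr'T]
  · intro A hA E hE
    have hAT : MeasurableSet A := FF_mono (hrr'.trans hr'T) A hA
    rcases hcross with hr's | hsr
    · rw [map_concat_prod_apply_of_le hts hsT hr's ((FF_mono hrr' A hA).inter (hincrFF hE)),
        map_concat_prod_apply_of_le hts hsT (hrr'.trans hr's) hA,
        map_concat_prod_apply_of_le hts hsT hr's (hincrFF hE)]
      exact hP.indep_incr r r' htr hrr' hr'T A hA E hE
    · rw [Measure.map_apply hc (hAT.inter (hincr hE)), Measure.map_apply hc hAT,
        Measure.map_apply hc (hincr hE), preimage_inter,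
        concat_preimage_incr_of_ge hts hsT hsr hrr', hsnd,
        prod_concat_preimage_inter_incr hts hsT hQ hsr hrr' hr'T hA hE]

lemma map_concat_prod (hP : IsWiener P) (hQ : IsWiener Q) :
    (P.prod Q).map (Function.uncurry (concat hts hsT)) = P :=
  (hasWienerIncrementsNotCrossing_map_concat hts hsT hP hQ).eq
    hP.hasWienerIncrementsNotCrossing hts hsT

end Concat

end Paths

theorem shifted_convergence_in_probability_general (d d' : ℕ) (t s T : ℝ)
    (hts : t ≤ s) (hsT : s ≤ T)
    (P : Measure (Paths d t T)) (hP : IsWiener P)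
    (Q : Measure (Paths d s T)) (hQ : IsWiener Q)
    (ξ : ℕ → Paths d t T → (Fin d' → ℝ))
    (hmeas : ∀ i, Measurable[FF d t T T] (ξ i))
    (hconv : ∀ ε : ℝ, 0 < ε →
      Tendsto (fun i => P {ω : Paths d t T | ε < ‖ξ i ω‖}) atTop (nhds 0)) :
    ∃ φ : ℕ → ℕ, StrictMono φ ∧
      ∀ᵐ ω ∂P, ∀ ε : ℝ, 0 < ε →
        Tendsto (fun i => Q {ϖ : Paths d s T | ε < ‖ξ (φ i) (concat hts hsT ω ϖ)‖})
          atTop (nhds 0) := by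
  have := hP.prob
  have := hQ.prob
  obtain ⟨φ, hφ, hae⟩ := (tendstoInMeasure_zero_iff_norm_lt.2 hconv).exists_seq_tendsto_ae
  refine ⟨φ, hφ, ?_⟩
  rw [← Paths.map_concat_prod hts hsT hP hQ] at hae
  filter_upwards [Measure.ae_ae_of_ae_prod
    (ae_of_ae_map (Paths.measurable_uncurry_concat hts hsT).aemeasurable hae)] with ω hω
  refine tendstoInMeasure_zero_iff_norm_lt.1 (tendstoInMeasure_of_tendsto_ae (fun i => ?_) hω)
  exact ((hmeas (φ i)).comp (Paths.measurable_concat_FF hts hsT ω hsT)).aestronglyMeasurable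

/-- Let `0 ≤ t ≤ s ≤ T` and let `{ξ_i}` be a sequence of `ℝ^{d'}`-valued
`F^t_T`-measurable random variables converging to `0` in `P^t_0`-probability.  Then there is
a subsequence `{ξ_{φ(i)}}` such that for `P^t_0`-a.e. `ω ∈ Ω^t`, the shifted sequence
`ξ_{φ(i)}^{s,ω}` converges to `0` in `P^s_0`-probability on `Ω^s`. -/
theorem shifted_convergence_in_probability (d d' : ℕ) (t s T : ℝ) (ht : 0 ≤ t)
    (hts : t ≤ s) (hsT : s ≤ T)
    (P : Measure (Paths d t T)) (hP : IsWiener P)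
    (Q : Measure (Paths d s T)) (hQ : IsWiener Q)
    (ξ : ℕ → Paths d t T → (Fin d' → ℝ))
    (hmeas : ∀ i, Measurable[FF d t T T] (ξ i))
    (hconv : ∀ ε : ℝ, 0 < ε →
      Tendsto (fun i => P {ω : Paths d t T | ε < ‖ξ i ω‖}) atTop (nhds 0)) :
    ∃ φ : ℕ → ℕ, StrictMono φ ∧
      ∀ᵐ ω ∂P, ∀ ε : ℝ, 0 < ε →
        Tendsto (fun i => Q {ϖ : Paths d s T | ε < ‖ξ (φ i) (concat hts hsT ω ϖ)‖})
          atTop (nhds 0) :=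
  shifted_convergence_in_probability_general d d' t s T hts hsT P hP Q hQ ξ hmeas hconv

end
end

section
/- Let t ∈ [0,T], let {X_s}_{s∈[t,T]} be an ℝ^d-valued process on Ω^t all of whose paths are continuous and start from 0, let Ω_X = X(Ω^t) be its image in Ω^t, and for s ∈ [t,T] let G^{Ω_X}_s = {(A ∩ Ω_X) ∪ A' : A ∈ F^t_s, A' ⊆ Ω_X^c}. If K is an M-valued F^X-progressively measurable process (M a metric space), then K_s is constant on each fiber X^{-1}(ω ⊗_s Ω^s), and for any fixed m₀ ∈ M the process K_s(ω) := m₀·1_{ω∉Ω_X} + K_s(X^{-1}(ω))·1_{ω∈Ω_X} is well defined and progressively measurable with respect to the filtration {G^{Ω_X}_s}_{s∈[t,T]}. -/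
open MeasureTheory Set Filter
open scoped Classical

noncomputable section

/-- The natural filtration `F^X_s = σ(X_r : r ∈ [t,s])` of the process `X`,
viewed as a map from `Ω^t` to `Ω^t`. -/
def FX (d : ℕ) (t T : ℝ) (X : Paths d t T → Paths d t T) (s : ℝ) :
    MeasurableSpace (Paths d t T) :=
  ⨆ r ∈ Set.Icc t s, MeasurableSpace.comap (fun ω : Paths d t T => (X ω).1 r) inferInstance

/-- The σ-field `G^{Ω_X}_s = {(A ∩ Ω_X) ∪ A' : A ∈ F^t_s, A' ⊆ Ω_Xᶜ}`, where
`Ω_X = X(Ω^t)` is the image of `X`. -/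
def GX (d : ℕ) (t T : ℝ) (X : Paths d t T → Paths d t T) (s : ℝ) :
    MeasurableSpace (Paths d t T) :=
  MeasurableSpace.generateFrom
    {B : Set (Paths d t T) | ∃ A A' : Set (Paths d t T),
      MeasurableSet[FF d t T s] A ∧ A' ⊆ (Set.range X)ᶜ ∧ B = (A ∩ Set.range X) ∪ A'}

/-! By construction `F^X_s` is the pullback of `F^t_s` along `X`, and `F^t_s` is the pullback of
the product σ-field along restriction of paths to `[t, s]`. A map measurable for a pullback
σ-field factors through the pulled-back map; paths in `X⁻¹(ω ⊗_s Ω^s)` have images agreeing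
on `[t, s]`, whence the constancy of `K_s` on fibers.

For the second claim, on `[t, r] × Ω_X` the preimage of a Borel set under the new process is the
trace of a set `C` measurable for `B([t, r]) ⊗ F^t_r`. Such traces are
`B([t, r]) ⊗ G^{Ω_X}_r`-measurable because `A ∩ Ω_X ∈ G^{Ω_X}_r` for every `A ∈ F^t_r`, and off
`Ω_X` the process is the constant `m₀`. -/

theorem MeasurableSet.inter_snd_preimage_of_prod {α β : Type*} [mα : MeasurableSpace α]
    {m₁ m₂ : MeasurableSpace β} {S : Set β} (hS : MeasurableSet[m₂] S)
    (hm : ∀ A, MeasurableSet[m₁] A → MeasurableSet[m₂] (A ∩ S))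
    {C : Set (α × β)} (hC : MeasurableSet[mα.prod m₁] C) :
    MeasurableSet[mα.prod m₂] (C ∩ Prod.snd ⁻¹' S) := by
  have hS' : MeasurableSet[mα.prod m₂] (Prod.snd ⁻¹' S) := measurable_snd hS
  let trace : MeasurableSpace (α × β) :=
    { MeasurableSet' := fun C => MeasurableSet[mα.prod m₂] (C ∩ Prod.snd ⁻¹' S)
      measurableSet_empty := by simp
      measurableSet_compl := fun C hC => by
        have h := hS'.diff hC
        rwa [sdiff_inter_self_eq_sdiff, sdiff_eq_compl_inter] at h
      measurableSet_iUnion := fun f hf => by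
        simpa only [iUnion_inter] using MeasurableSet.iUnion hf }
  refine (sup_le ?_ ?_ : mα.prod m₁ ≤ trace) C hC
  · rintro _ ⟨B, hB, rfl⟩
    exact (measurable_fst hB).inter hS'
  · rintro _ ⟨A, hA, rfl⟩
    exact measurable_snd (hm A hA)

theorem measurable_dite_range_of_comap {α β δ γ : Type*} [mα : MeasurableSpace α]
    [MeasurableSpace γ] {m₁ m₂ : MeasurableSpace β} {X : δ → β} {K : α → δ → γ}
    (hK : Measurable[mα.prod (m₁.comap X)] fun p : α × δ => K p.1 p.2)
    (hX : MeasurableSet[m₂] (range X))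
    (hm : ∀ A, MeasurableSet[m₁] A → MeasurableSet[m₂] (A ∩ range X)) (c : γ) :
    Measurable[mα.prod m₂] fun p : α × β => if h : ∃ y, X y = p.2 then K p.1 h.choose else c := by
  intro B hB
  rw [← MeasurableSpace.comap_id (m := mα), ← MeasurableSpace.comap_prodMap] at hK
  obtain ⟨C, hC, hCK⟩ := hK hB
  have hCK' : ∀ u y, (u, X y) ∈ C ↔ K u y ∈ B := fun u y => Set.ext_iff.1 hCK (u, y)
  have hpre : (fun p : α × β => if h : ∃ y, X y = p.2 then K p.1 h.choose else c) ⁻¹' B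
      = (C ∩ Prod.snd ⁻¹' range X) ∪ ({_p | c ∈ B} \ Prod.snd ⁻¹' range X) := by
    ext ⟨u, x⟩
    by_cases h : ∃ y, X y = x
    · have hx : x ∈ range X := h
      simp [dif_pos h, hx, ← hCK', h.choose_spec]
    · have hx : x ∉ range X := h
      simp [dif_neg h, hx]
  rw [hpre]
  exact (MeasurableSet.inter_snd_preimage_of_prod hX hm hC).union
    ((MeasurableSet.const _).diff (measurable_snd hX))

theorem concat_val_of_le {d : ℕ} {t s T : ℝ} (hts : t ≤ s) (hsT : s ≤ T)
    (ω : Paths d t T) (ϖ : Paths d s T) {r : ℝ} (hr : r ≤ s) :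
    (concat hts hsT ω ϖ).1 r = ω.1 r := by
  simp only [concat, min_eq_left hr, max_eq_right hr, ϖ.2.2.1 s le_rfl, add_zero]

theorem FF_eq_comap_restrict (d : ℕ) (t T s : ℝ) :
    FF d t T s = MeasurableSpace.pi.comap fun (ω : Paths d t T) (r : Icc t s) => ω.1 r := by
  simp only [FF, MeasurableSpace.pi, MeasurableSpace.comap_iSup, MeasurableSpace.comap_comp,
    iSup_subtype']
  rfl

theorem FX_eq_comap_FF (d : ℕ) (t T : ℝ) (X : Paths d t T → Paths d t T) (s : ℝ) :
    FX d t T X s = (FF d t T s).comap X := by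
  simp only [FX, FF, MeasurableSpace.comap_iSup, MeasurableSpace.comap_comp]
  rfl

theorem measurableSet_GX_inter_range {d : ℕ} {t T : ℝ} {X : Paths d t T → Paths d t T} {s : ℝ}
    {A : Set (Paths d t T)} (hA : MeasurableSet[FF d t T s] A) :
    MeasurableSet[GX d t T X s] (A ∩ range X) :=
  MeasurableSpace.measurableSet_generateFrom ⟨A, ∅, hA, empty_subset _, (union_empty _).symm⟩

theorem measurableSet_GX_range {d : ℕ} {t T : ℝ} {X : Paths d t T → Paths d t T} {s : ℝ} :
    MeasurableSet[GX d t T X s] (range X) := by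
  simpa using measurableSet_GX_inter_range (X := X) (MeasurableSet.univ (m := FF d t T s))

theorem image_filtration_progressive_general {M : Type*}
    [MetricSpace M] [MeasurableSpace M] [BorelSpace M]
    (d : ℕ) (t T : ℝ)
    (X : Paths d t T → Paths d t T) (K : ℝ → Paths d t T → M)
    (hK : ∀ r : ℝ, t ≤ r → r ≤ T →
      Measurable[(inferInstance : MeasurableSpace (Set.Icc t r)).prod (FX d t T X r)]
        fun p : Set.Icc t r × Paths d t T => K p.1 p.2)
    (m₀ : M) :
    (∀ s : ℝ, ∀ hts : t ≤ s, ∀ hsT : s ≤ T, ∀ ω ω₁ ω₂ : Paths d t T,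
      (∃ ϖ : Paths d s T, X ω₁ = concat hts hsT ω ϖ) →
      (∃ ϖ : Paths d s T, X ω₂ = concat hts hsT ω ϖ) →
      K s ω₁ = K s ω₂) ∧
    (∀ r : ℝ, t ≤ r → r ≤ T →
      Measurable[(inferInstance : MeasurableSpace (Set.Icc t r)).prod (GX d t T X r)]
        fun p : Set.Icc t r × Paths d t T =>
          if h : ∃ ω', X ω' = p.2 then K p.1 h.choose else m₀) := by
  refine ⟨fun s hts hsT ω ω₁ ω₂ ⟨ϖ₁, h₁⟩ ⟨ϖ₂, h₂⟩ => ?_, fun r htr hrT => ?_⟩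
  · have hKs : Measurable[FX d t T X s] (K s) := (hK s hts hsT).comp
      (measurable_prodMk_left (x := (⟨s, hts, le_rfl⟩ : Icc t s)) (mβ := FX d t T X s))
    rw [FX_eq_comap_FF, FF_eq_comap_restrict, MeasurableSpace.comap_comp] at hKs
    refine hKs.factorsThrough (funext fun r => ?_)
    simp only [Function.comp_apply, h₁, h₂, concat_val_of_le _ _ _ _ r.2.2]
  · have hKr := hK r htr hrT
    rw [FX_eq_comap_FF] at hKr
    exact measurable_dite_range_of_comap (K := fun u : Icc t r => K u) hKr measurableSet_GX_range
      (fun _ hA => measurableSet_GX_inter_range hA) m₀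

/-- Let `X : Ω^t → Ω^t` be a process all of whose paths are continuous
and start from `0` (encoded by its taking values in `Ω^t`), and let `K` be an `M`-valued
`F^X`-progressively measurable process.  Then `K_s` is constant on each fiber
`X⁻¹(ω ⊗_s Ω^s)`, and for any `m₀ ∈ M` the process
`K'_s(ω) = m₀` on `Ω_Xᶜ`, `K'_s(ω) = K_s(X⁻¹(ω))` on `Ω_X`,
is progressively measurable with respect to the filtration `{G^{Ω_X}_s}`. -/
theorem image_filtration_progressive {M : Type*}
    [MetricSpace M] [MeasurableSpace M] [BorelSpace M]
    (d : ℕ) (t T : ℝ) (ht : 0 ≤ t) (htT : t ≤ T)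
    (X : Paths d t T → Paths d t T) (K : ℝ → Paths d t T → M)
    (hK : ∀ r : ℝ, t ≤ r → r ≤ T →
      Measurable[(inferInstance : MeasurableSpace (Set.Icc t r)).prod (FX d t T X r)]
        fun p : Set.Icc t r × Paths d t T => K p.1 p.2)
    (m₀ : M) :
    (∀ s : ℝ, ∀ hts : t ≤ s, ∀ hsT : s ≤ T, ∀ ω ω₁ ω₂ : Paths d t T,
      (∃ ϖ : Paths d s T, X ω₁ = concat hts hsT ω ϖ) →
      (∃ ϖ : Paths d s T, X ω₂ = concat hts hsT ω ϖ) →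
      K s ω₁ = K s ω₂) ∧
    (∀ r : ℝ, t ≤ r → r ≤ T →
      Measurable[(inferInstance : MeasurableSpace (Set.Icc t r)).prod (GX d t T X r)]
        fun p : Set.Icc t r × Paths d t T =>
          if h : ∃ ω', X ω' = p.2 then K p.1 h.choose else m₀) :=
  image_filtration_progressive_general d t T X K hK m₀

end
end
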